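/- The set of elements of ℤ_2 of the form (m : ℤ_2) with m ∈ ℤ an integer whose orbit under g_{2,3} is ultimately periodic (i.e. there exist n₀ ∈ ℕ and k ≥ 1 with g_{2,3}^{n₀+k}(m) = g_{2,3}^{n₀}(m)) is dense in ℤ_2. -/

import Mathlib

open scoped Classical

/-- `ε₀(u)`: the unique integer in `{0, 1}` congruent to `u` modulo `2`. -/
noncomputable def eps0 (u : ℤ_[2]) : ℕ := (PadicInt.toZMod u).val

/-!
On the residue class `a + 2ⁿℤ` the first `n` Collatz steps act as the affine map
`t ↦ Tⁿ(a) + 3ᴶ t`, where `J` is the number of odd steps among them. Since `2` is a primitive root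
modulo every power of `3`, and `Tⁿ(a)` is prime to `3` as soon as `J > 0`, some `t` makes
`Tⁿ(a + 2ⁿt)` a power of `2`, after which the orbit falls into the cycle `1 → 2 → 1`. So every
residue class modulo `2ⁿ` contains an integer with ultimately periodic orbit, and on integers
`g_{2,3}` is the Collatz map.
-/

theorem orderOf_two_zmod_three_pow (j : ℕ) : orderOf (2 : ZMod (3 ^ (j + 1))) = 2 * 3 ^ j := by
  have : Fact (1 < 3 ^ (j + 1)) := ⟨Nat.one_lt_pow (by omega) (by omega)⟩
  have hneg : orderOf (-1 : ZMod (3 ^ (j + 1))) = 2 := by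
    have h3 : 3 ≤ 3 ^ (j + 1) := Nat.le_self_pow (by omega) 3
    rw [orderOf_neg_one, ZMod.ringChar_zmod_n, if_neg (by omega)]
  have hone : orderOf (1 + ((3 : ℕ) : ZMod (3 ^ (j + 1))) * ((-1 : ℤ) : ZMod _)) = 3 ^ j :=
    ZMod.orderOf_one_add_mul_prime Nat.prime_three (by norm_num) _ (by norm_num) j
  have htwo : (2 : ZMod (3 ^ (j + 1))) = -1 * (1 + ((3 : ℕ) : ZMod _) * ((-1 : ℤ) : ZMod _)) := by
    push_cast; ring
  rw [htwo, (Commute.all _ _).orderOf_mul_eq_mul_orderOf_of_coprime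
    (by rw [hneg, hone]; exact Nat.Coprime.pow_right _ (by norm_num)), hneg, hone]

theorem ZMod.exists_two_pow_eq_of_isUnit {j : ℕ} {c : ZMod (3 ^ j)} (hc : IsUnit c) :
    ∃ k : ℕ, 2 ^ k = c := by
  rcases j with _ | j
  · have : Subsingleton (ZMod (3 ^ 0)) := ZMod.subsingleton_iff.mpr (pow_zero 3)
    exact ⟨0, Subsingleton.elim _ _⟩
  have h2 : IsUnit (2 : ZMod (3 ^ (j + 1))) := by
    rw [show (2 : ZMod (3 ^ (j + 1))) = ((2 : ℕ) : ZMod _) by norm_cast, ZMod.isUnit_iff_coprime]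
    exact Nat.Coprime.pow_right _ (by norm_num)
  have htop : Subgroup.zpowers h2.unit = ⊤ := by
    apply Subgroup.eq_top_of_card_eq
    rw [Nat.card_zpowers, ← orderOf_units, IsUnit.unit_spec, orderOf_two_zmod_three_pow,
      Nat.card_eq_fintype_card, ZMod.card_units_eq_totient,
      Nat.totient_prime_pow_succ Nat.prime_three]
    ring
  obtain ⟨k, hk⟩ := mem_powers_iff_mem_zpowers.mpr (htop ▸ Subgroup.mem_top hc.unit)
  exact ⟨k, by simpa using congrArg Units.val hk⟩

theorem exists_three_pow_dvd_two_pow_sub {j : ℕ} {c : ℤ} (hc : IsCoprime (3 ^ j : ℤ) c) :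
    ∃ k : ℕ, (3 : ℤ) ^ j ∣ 2 ^ k - c := by
  obtain ⟨k, hk⟩ := ZMod.exists_two_pow_eq_of_isUnit
    ((ZMod.coe_int_isUnit_iff_isCoprime c (3 ^ j)).mpr (by exact_mod_cast hc))
  have := (ZMod.intCast_eq_intCast_iff_dvd_sub c (2 ^ k) (3 ^ j)).mp (by push_cast; exact hk.symm)
  exact ⟨k, by exact_mod_cast this⟩

def collatz (m : ℤ) : ℤ := if 2 ∣ m then m / 2 else (3 * m + 1) / 2

def oddSteps : ℕ → ℤ → ℕ
  | 0, _ => 0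
  | n + 1, m => (if 2 ∣ m then 0 else 1) + oddSteps n (collatz m)

theorem two_mul_collatz_of_two_dvd {m : ℤ} (h : 2 ∣ m) : 2 * collatz m = m := by
  rw [collatz, if_pos h]; omega

theorem two_mul_collatz_of_not_two_dvd {m : ℤ} (h : ¬ 2 ∣ m) : 2 * collatz m = 3 * m + 1 := by
  rw [collatz, if_neg h]; omega

theorem collatz_add_two_mul (m t : ℤ) :
    collatz (m + 2 * t) = collatz m + (if 2 ∣ m then 1 else 3) * t := by
  by_cases h : 2 ∣ m
  · have h' : 2 ∣ m + 2 * t := dvd_add h (dvd_mul_right 2 t)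
    have := two_mul_collatz_of_two_dvd h'
    have := two_mul_collatz_of_two_dvd h
    rw [if_pos h]; omega
  · have h' : ¬ 2 ∣ m + 2 * t := by omega
    have := two_mul_collatz_of_not_two_dvd h'
    have := two_mul_collatz_of_not_two_dvd h
    rw [if_neg h]; omega

theorem collatz_iterate_add_two_pow_mul (n : ℕ) (m t : ℤ) :
    collatz^[n] (m + 2 ^ n * t) = collatz^[n] m + 3 ^ oddSteps n m * t := by
  induction n generalizing m t with
  | zero => simp [oddSteps]
  | succ n ih =>
    rw [Function.iterate_succ_apply, Function.iterate_succ_apply, pow_succ', mul_assoc,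
      collatz_add_two_mul, mul_left_comm, ih, oddSteps, pow_add]
    split_ifs <;> ring

theorem not_three_dvd_collatz {m : ℤ} (h : ¬ 3 ∣ m ∨ ¬ 2 ∣ m) : ¬ 3 ∣ collatz m := by
  by_cases h2 : 2 ∣ m
  · have := two_mul_collatz_of_two_dvd h2; omega
  · have := two_mul_collatz_of_not_two_dvd h2; omega

theorem not_three_dvd_collatz_iterate {n : ℕ} {m : ℤ} (h : ¬ 3 ∣ m ∨ 0 < oddSteps n m) :
    ¬ 3 ∣ collatz^[n] m := by
  induction n generalizing m with
  | zero => simpa [oddSteps] using h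
  | succ n ih =>
    rw [Function.iterate_succ_apply]
    refine ih ?_
    by_cases h2 : 2 ∣ m
    · simp only [oddSteps, if_pos h2, zero_add] at h
      exact h.imp_left fun h3 => not_three_dvd_collatz (.inl h3)
    · exact .inl (not_three_dvd_collatz (.inr h2))

theorem isCoprime_three_pow_oddSteps (n : ℕ) (m : ℤ) :
    IsCoprime ((3 : ℤ) ^ oddSteps n m) (collatz^[n] m) := by
  rcases Nat.eq_zero_or_pos (oddSteps n m) with h | h
  · rw [h, pow_zero]; exact isCoprime_one_left
  · have h3 : ¬ 3 ∣ collatz^[n] m := not_three_dvd_collatz_iterate (.inr h)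
    exact (Int.prime_three.coprime_iff_not_dvd.mpr h3).pow_left

theorem collatz_iterate_two_pow (k : ℕ) : collatz^[k] (2 ^ k) = 1 := by
  induction k with
  | zero => rfl
  | succ k ih =>
    have h : 2 * collatz (2 ^ (k + 1)) = 2 * 2 ^ k := by
      rw [two_mul_collatz_of_two_dvd (dvd_pow_self 2 k.succ_ne_zero), pow_succ']
    rw [Function.iterate_succ_apply, mul_left_cancel₀ two_ne_zero h, ih]

theorem exists_collatz_iterate_add_two_pow_mul_eq_one (a : ℤ) (n : ℕ) :
    ∃ t : ℤ, ∃ k : ℕ, collatz^[k + n] (a + 2 ^ n * t) = 1 := by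
  obtain ⟨k, t, ht⟩ := exists_three_pow_dvd_two_pow_sub (isCoprime_three_pow_oddSteps n a)
  refine ⟨t, k, ?_⟩
  rw [Function.iterate_add_apply, collatz_iterate_add_two_pow_mul, ← ht, add_sub_cancel,
    collatz_iterate_two_pow]

theorem PadicInt.dense_of_forall_exists_intCast_add_pow_mul_mem {p : ℕ} [Fact p.Prime]
    {S : Set ℤ_[p]} (h : ∀ (a : ℤ) (n : ℕ), ∃ t : ℤ, ((a + p ^ n * t : ℤ) : ℤ_[p]) ∈ S) :
    Dense S := by
  rw [Metric.dense_iff]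
  intro x r hr
  have hp : (p : ℝ)⁻¹ < 1 :=
    inv_lt_one_of_one_lt₀ (by exact_mod_cast (Fact.out : p.Prime).one_lt)
  obtain ⟨n, hn⟩ := exists_pow_lt_of_lt_one hr hp
  obtain ⟨a, ha⟩ := PadicInt.denseRange_intCast.exists_dist_lt x hr
  obtain ⟨t, ht⟩ := h a n
  refine ⟨_, ?_, ht⟩
  have hclose : dist ((a + p ^ n * t : ℤ) : ℤ_[p]) a < r := by
    rw [dist_eq_norm, ← Int.cast_sub, add_sub_cancel_left]
    refine lt_of_le_of_lt (PadicInt.norm_int_le_pow_iff_dvd.mpr (dvd_mul_right _ _)) ?_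
    simpa [zpow_neg] using hn
  exact (dist_triangle_max _ _ _).trans_lt (max_lt hclose (by rwa [dist_comm]))

theorem PadicInt.two_dvd_intCast_iff (m : ℤ) : (2 : ℤ_[2]) ∣ (m : ℤ_[2]) ↔ 2 ∣ m := by
  simpa using (PadicInt.norm_lt_one_iff_dvd (m : ℤ_[2])).symm.trans
    (PadicInt.norm_int_lt_one_iff_dvd m)

theorem eps0_intCast_of_odd {m : ℤ} (h : Odd m) : eps0 m = 1 := by
  rw [eps0, map_intCast, ZMod.intCast_eq_one_iff_odd.mpr h, ZMod.val_one]

def IsTwoAdicCollatzMap (g : ℤ_[2] → ℤ_[2]) : Prop :=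
  ∀ u : ℤ_[2], (2 : ℤ_[2]) * g u =
    if (2 : ℤ_[2]) ∣ u then u else (3 : ℤ_[2]) * u + (eps0 (-((3 : ℤ_[2]) * u)) : ℤ_[2])

namespace IsTwoAdicCollatzMap

variable {g : ℤ_[2] → ℤ_[2]}

theorem apply_intCast (hg : IsTwoAdicCollatzMap g) (m : ℤ) : g m = (collatz m : ℤ) := by
  refine mul_left_cancel₀ (two_ne_zero : (2 : ℤ_[2]) ≠ 0) ?_
  rw [hg, PadicInt.two_dvd_intCast_iff]
  split_ifs with h
  · exact_mod_cast (two_mul_collatz_of_two_dvd h).symm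
  · have hodd : Odd (-(3 * m)) := by rw [← Int.not_even_iff_odd, even_iff_two_dvd]; omega
    rw [← Int.cast_ofNat, ← Int.cast_mul, ← Int.cast_neg, eps0_intCast_of_odd hodd]
    exact_mod_cast (two_mul_collatz_of_not_two_dvd h).symm

theorem iterate_intCast (hg : IsTwoAdicCollatzMap g) (n : ℕ) (m : ℤ) :
    g^[n] m = (collatz^[n] m : ℤ) := by
  induction n generalizing m with
  | zero => rfl
  | succ n ih => rw [Function.iterate_succ_apply, Function.iterate_succ_apply, hg.apply_intCast, ih]

end IsTwoAdicCollatzMap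

/-- The integers whose orbit under `g_{2,3}` is ultimately periodic form a dense
subset of `ℤ_2`. -/
theorem stmt13 (g : ℤ_[2] → ℤ_[2])
    (hg : ∀ u : ℤ_[2], (2 : ℤ_[2]) * g u =
      if (2 : ℤ_[2]) ∣ u then u
      else (3 : ℤ_[2]) * u + (eps0 (-((3 : ℤ_[2]) * u)) : ℤ_[2])) :
    Dense {x : ℤ_[2] | ∃ m : ℤ, (m : ℤ_[2]) = x ∧
      ∃ n₀ : ℕ, ∃ k ≥ 1, g^[n₀ + k] (m : ℤ_[2]) = g^[n₀] (m : ℤ_[2])} := by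
  refine PadicInt.dense_of_forall_exists_intCast_add_pow_mul_mem fun a n => ?_
  obtain ⟨t, k, hone⟩ := exists_collatz_iterate_add_two_pow_mul_eq_one a n
  have hcycle : collatz^[2] 1 = 1 := by decide
  refine ⟨t, _, rfl, k + n, 2, one_le_two, ?_⟩
  rw [IsTwoAdicCollatzMap.iterate_intCast hg, IsTwoAdicCollatzMap.iterate_intCast hg,
    add_comm (k + n), Function.iterate_add_apply, Nat.cast_ofNat, hone, hcycle]
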